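/- arXiv:2412.09969 — 3 statements merged into one kernel-verified Lean document; each statement's English description precedes it below -/
import Mathlib

section
/- For k ≥ 3 with k not divisible by 3, the k-prism admits no injective 3-colouring. -/
/-! Read the colours in `ZMod 3`. Three distinct vertices with a common neighbour receive the
three distinct colours, which sum to `0`; as the prism is cubic, the colours of the neighbourhood
of every vertex sum to `0`. Eliminating the second cycle from these relations at `u_{i±1}` and
`v_i` leaves `a_{i-2} + a_i + a_{i+2} = 0` for the colours `a_i` of the first cycle, so
`a_0, a_2, a_4, …` is an arithmetic progression in `ZMod 3` whose difference `a_2 - a_0` is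
nonzero (`u_0` and `u_2` share the neighbour `u_1`). Coming back to `a_{2k} = a_0` after `k` steps
forces `3 ∣ k`. -/

/-- `c` is an injective colouring of `G`: any two distinct vertices sharing a
common neighbour receive different colours. -/
def IsInjColoring {V α : Type} (G : SimpleGraph V) (c : V → α) : Prop :=
  ∀ u v : V, u ≠ v → (∃ w, G.Adj u w ∧ G.Adj v w) → c u ≠ c v

/-- The injective chromatic number of `G`, as an extended natural number. -/
noncomputable def injChrom {V : Type} (G : SimpleGraph V) : ℕ∞ :=
  ⨅ n ∈ {n : ℕ | ∃ c : V → Fin n, IsInjColoring G c}, (n : ℕ∞)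

/-- The `k`-prism: two `k`-cycles `u_0…u_{k−1}`, `v_0…v_{k−1}` (encoded as
`(i, 0)` and `(i, 1)`) together with the rungs `u_i v_i`. -/
def prism (k : ℕ) : SimpleGraph (Fin k × Fin 2) where
  Adj x y :=
    (x.2 = y.2 ∧ x.1 ≠ y.1 ∧
      (y.1.val = (x.1.val + 1) % k ∨ x.1.val = (y.1.val + 1) % k)) ∨
    (x.1 = y.1 ∧ x.2 ≠ y.2)
  symm := by
    constructor
    rintro ⟨i, a⟩ ⟨j, b⟩ (⟨h1, h2, h3⟩ | ⟨h1, h2⟩)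
    · exact Or.inl ⟨h1.symm, h2.symm, h3.symm⟩
    · exact Or.inr ⟨h1.symm, h2.symm⟩
  loopless := by
    constructor
    rintro ⟨i, a⟩ (⟨-, h, -⟩ | ⟨-, h⟩) <;> exact h rfl

open Fin.NatCast

theorem IsInjColoring.ne_of_adj {V α : Type} {G : SimpleGraph V} {c : V → α}
    (hc : IsInjColoring G c) {u v w : V} (huv : u ≠ v) (hu : G.Adj u w) (hv : G.Adj v w) :
    c u ≠ c v :=
  hc u v huv ⟨w, hu, hv⟩

theorem ZMod.add_add_eq_zero_of_pairwise_ne {x y z : ZMod 3} (hxy : x ≠ y) (hxz : x ≠ z)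
    (hyz : y ≠ z) : x + y + z = 0 := by
  revert x y z; decide

theorem IsInjColoring.add_add_eq_zero {V : Type} {G : SimpleGraph V} {c : V → ZMod 3}
    (hc : IsInjColoring G c) {w x y z : V} (hx : G.Adj x w) (hy : G.Adj y w) (hz : G.Adj z w)
    (hxy : x ≠ y) (hxz : x ≠ z) (hyz : y ≠ z) : c x + c y + c z = 0 :=
  ZMod.add_add_eq_zero_of_pairwise_ne (hc.ne_of_adj hxy hx hy) (hc.ne_of_adj hxz hx hz)
    (hc.ne_of_adj hyz hy hz)

theorem ZMod.eq_add_mul_of_add_add_eq_zero {a : ℕ → ZMod 3}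
    (h : ∀ n, a n + a (n + 1) + a (n + 2) = 0) (n : ℕ) : a n = a 0 + n * (a 1 - a 0) := by
  have h3 : (3 : ZMod 3) = 0 := rfl
  -- in `ZMod 3`, `x + y + z = 0` says that `x, y, z` is an arithmetic progression
  have hdiff : ∀ n, a (n + 1) - a n = a 1 - a 0 := by
    intro n
    induction n with
    | zero => rfl
    | succ n ih => linear_combination h n - a (n + 1) * h3 + ih
  induction n with
  | zero => simp
  | succ n ih => push_cast; linear_combination ih + hdiff n

theorem Fin.natCast_ne_natCast_add {k : ℕ} [NeZero k] (n : ℕ) {m : ℕ} (hm : 0 < m)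
    (hmk : m < k) : (n : Fin k) ≠ ((n + m : ℕ) : Fin k) := by
  intro h
  have hmod : n ≡ n + m [MOD k] := by
    rw [Fin.ext_iff, Fin.val_natCast, Fin.val_natCast] at h
    exact h
  have hdvd : k ∣ m := by simpa using (Nat.modEq_iff_dvd' (Nat.le_add_right n m)).mp hmod
  exact absurd (Nat.le_of_dvd hm hdvd) (by omega)

theorem prism_adj_natCast_succ {k : ℕ} [NeZero k] (hk : 2 ≤ k) (n : ℕ) (j : Fin 2) :
    (prism k).Adj ((n : Fin k), j) (((n + 1 : ℕ) : Fin k), j) :=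
  Or.inl ⟨rfl, Fin.natCast_ne_natCast_add n one_pos hk,
    Or.inl (by rw [Fin.val_natCast, Fin.val_natCast, Nat.mod_add_mod])⟩

theorem prism_adj_of_ne {k : ℕ} (i : Fin k) {j j' : Fin 2} (h : j ≠ j') :
    (prism k).Adj (i, j) (i, j') :=
  Or.inr ⟨rfl, h⟩

theorem IsInjColoring.prism_add_add_eq_zero {k : ℕ} [NeZero k] (hk : 3 ≤ k)
    {c : Fin k × Fin 2 → ZMod 3} (hc : IsInjColoring (prism k) c) {j j' : Fin 2} (hj : j ≠ j')
    (n : ℕ) :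
    c ((n : Fin k), j) + c (((n + 2 : ℕ) : Fin k), j) + c (((n + 1 : ℕ) : Fin k), j') = 0 := by
  refine hc.add_add_eq_zero (w := (((n + 1 : ℕ) : Fin k), j))
    (prism_adj_natCast_succ (by omega) n j) (prism_adj_natCast_succ (by omega) (n + 1) j).symm
    (prism_adj_of_ne _ hj.symm) ?_ ?_ ?_
  · exact ne_of_apply_ne Prod.fst (Fin.natCast_ne_natCast_add n (m := 2) two_pos (by omega))
  · exact ne_of_apply_ne Prod.snd hj
  · exact ne_of_apply_ne Prod.snd hj

theorem IsInjColoring.prism_add_add_eq_zero_two_step {k : ℕ} [NeZero k] (hk : 3 ≤ k)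
    {c : Fin k × Fin 2 → ZMod 3} (hc : IsInjColoring (prism k) c) (n : ℕ) :
    c ((n : Fin k), 0) + c (((n + 2 : ℕ) : Fin k), 0) + c (((n + 4 : ℕ) : Fin k), 0) = 0 := by
  have h01 : (0 : Fin 2) ≠ 1 := by decide
  have hu := hc.prism_add_add_eq_zero hk h01
  have hv := hc.prism_add_add_eq_zero hk h01.symm (n + 1)
  linear_combination hu n + hu (n + 2) - hv

/-- For `k ≥ 3` with `k` not divisible by 3, the `k`-prism admits no injective
3-colouring. -/
theorem prism_no_inj_three_coloring (k : ℕ) (hk : 3 ≤ k) (hdvd : ¬ 3 ∣ k) :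
    ¬ ∃ c : Fin k × Fin 2 → Fin 3, IsInjColoring (prism k) c := by
  rintro ⟨c, hc⟩
  have : NeZero k := ⟨by omega⟩
  -- `ZMod 3` is `Fin 3` by definition, so `c` is also a colouring by `ZMod 3`.
  set a : ℕ → ZMod 3 := fun m => c (((2 * m : ℕ) : Fin k), 0) with ha
  have hprog : ∀ m, a m = a 0 + m * (a 1 - a 0) :=
    ZMod.eq_add_mul_of_add_add_eq_zero fun m => by
      simpa only [ha, mul_add, add_assoc] using
        hc.prism_add_add_eq_zero_two_step (c := c) hk (2 * m)
  have hperiod : a k = a 0 := by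
    simp only [ha]
    congr 2
    ext
    simp [Fin.val_natCast]
  have hne : a 0 ≠ a 1 :=
    hc.ne_of_adj (ne_of_apply_ne Prod.fst (Fin.natCast_ne_natCast_add 0 two_pos (by omega)))
      (prism_adj_natCast_succ (by omega) 0 0) (prism_adj_natCast_succ (by omega) 1 0).symm
  have hk3 : (k : ZMod 3) = 0 := by
    have hmul : (k : ZMod 3) * (a 1 - a 0) = 0 := by linear_combination hperiod - hprog k
    exact (mul_eq_zero.mp hmul).resolve_right (sub_ne_zero.mpr hne.symm)
  exact hdvd ((ZMod.natCast_eq_zero_iff k 3).mp hk3)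
end

section
/- For every k ≥ 3, the k-prism admits an injective 4-colouring. -/
open SimpleGraph

instance (k : ℕ) : DecidableRel (prism k).Adj := fun _ _ =>
  inferInstanceAs (Decidable (_ ∨ _))

theorem IsInjColoring.of_comp {V α β : Type} {G : SimpleGraph V} {c : V → α} {g : α → β}
    (h : IsInjColoring G (g ∘ c)) : IsInjColoring G c :=
  fun u v huv hw hc => h u v huv hw (congrArg g hc)

theorem isInjColoring_boxProd_top_fin_two {V α : Type} {G : SimpleGraph V} {f : V → α}
    (hproper : ∀ u v, G.Adj u v → f u ≠ f v) (hinj : IsInjColoring G f) :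
    IsInjColoring (G □ (⊤ : SimpleGraph (Fin 2))) (f ∘ Prod.fst) := by
  rintro ⟨a, s⟩ ⟨b, t⟩ hne ⟨⟨m, r⟩, hamr, hbmr⟩
  simp only [boxProd_adj, top_adj] at hamr hbmr
  rcases hamr with ⟨ham, rfl⟩ | ⟨hsr, rfl⟩ <;> rcases hbmr with ⟨hbm, rfl⟩ | ⟨htr, rfl⟩
  · exact hinj a b (fun hab => hne (by rw [hab])) ⟨m, ham, hbm⟩
  · exact hproper a b ham
  · exact (hproper b a hbm).symm
  · exact absurd (by rw [show s = t by omega]) hne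

def cycleMod (k : ℕ) : SimpleGraph (Fin k) :=
  SimpleGraph.fromRel fun i j => j.val = (i.val + 1) % k

theorem prism_eq_boxProd (k : ℕ) : prism k = cycleMod k □ (⊤ : SimpleGraph (Fin 2)) := by
  ext ⟨i, s⟩ ⟨j, t⟩
  simp only [prism, cycleMod, boxProd_adj, fromRel_adj, top_adj]
  tauto

theorem Nat.eq_succ_or_wrap_of_eq_succ_mod {k i j : ℕ} (hi : i < k) (h : j = (i + 1) % k) :
    j = i + 1 ∨ (i + 1 = k ∧ j = 0) := by
  rcases (Nat.succ_le_of_lt hi).lt_or_eq with hlt | heq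
  · exact .inl (h.trans (Nat.mod_eq_of_lt hlt))
  · exact .inr ⟨heq, by rw [h, ← heq, Nat.succ_eq_add_one, Nat.mod_self]⟩

theorem cycleMod_adj_val {k : ℕ} {i j : Fin k} (h : (cycleMod k).Adj i j) :
    j.val = i.val + 1 ∨ i.val = j.val + 1 ∨ (i.val + 1 = k ∧ j.val = 0) ∨
      (j.val + 1 = k ∧ i.val = 0) := by
  rcases h.2 with h | h
  · rcases Nat.eq_succ_or_wrap_of_eq_succ_mod i.isLt h with h | h <;> tauto
  · rcases Nat.eq_succ_or_wrap_of_eq_succ_mod j.isLt h with h | h <;> tauto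

def blockColouring (a i : ℕ) : ℕ := if i < 3 * a then i % 3 else (i - 3 * a) % 4

theorem blockColouring_lt_four (a i : ℕ) : blockColouring a i < 4 := by
  unfold blockColouring; split_ifs <;> omega

theorem blockColouring_ne_of_adj {a b : ℕ} {i j : Fin (3 * a + 4 * b)}
    (h : (cycleMod _).Adj i j) : blockColouring a i ≠ blockColouring a j := by
  have hi := i.isLt
  have hj := j.isLt
  have hij := cycleMod_adj_val h
  unfold blockColouring; split_ifs <;> omega

theorem isInjColoring_blockColouring (a b : ℕ) :
    IsInjColoring (cycleMod (3 * a + 4 * b)) fun i => blockColouring a i := by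
  rintro i j hij ⟨m, him, hjm⟩
  have hi := i.isLt
  have hj := j.isLt
  have him' := cycleMod_adj_val him
  have hjm' := cycleMod_adj_val hjm
  have hij' := Fin.val_ne_of_ne hij
  dsimp only; unfold blockColouring; split_ifs <;> omega

theorem exists_eq_three_mul_add_four_mul {k : ℕ} (hk : 3 ≤ k) (hk5 : k ≠ 5) :
    ∃ a b, k = 3 * a + 4 * b := by
  obtain h | h | h : k % 3 = 0 ∨ k % 3 = 1 ∨ k % 3 = 2 := by omega
  · exact ⟨k / 3, 0, by omega⟩
  · exact ⟨(k - 4) / 3, 1, by omega⟩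
  · exact ⟨(k - 8) / 3, 2, by omega⟩

theorem isInjColoring_prism_five : IsInjColoring (prism 5)
    fun x => (![![0, 0], ![1, 2], ![1, 2], ![3, 3], ![2, 1]] x.1 x.2 : Fin 4) := by
  unfold IsInjColoring
  decide

/-- For every `k ≥ 3`, the `k`-prism admits an injective 4-colouring. -/
theorem prism_inj_four_coloring (k : ℕ) (hk : 3 ≤ k) :
    ∃ c : Fin k × Fin 2 → Fin 4, IsInjColoring (prism k) c := by
  by_cases hk5 : k = 5
  · subst hk5
    exact ⟨_, isInjColoring_prism_five⟩
  obtain ⟨a, b, rfl⟩ := exists_eq_three_mul_add_four_mul hk hk5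
  refine ⟨fun x => ⟨blockColouring a x.1, blockColouring_lt_four a _⟩, ?_⟩
  apply IsInjColoring.of_comp (g := Fin.val)
  rw [prism_eq_boxProd]
  exact isInjColoring_boxProd_top_fin_two (fun _ _ => blockColouring_ne_of_adj)
    (isInjColoring_blockColouring a b)
end

section
/- For r ≥ 5 with r not divisible by 3, the generalised dodecahedron D_r admits no injective 3-colouring. -/
/-- One orientation of the edges of the generalised dodecahedron `D_r`.
Vertices are encoded as `(i, t)` with `t = 0` for `u_i`, `t = 1` for `v_i`,
`t = 2` for `u'_i` and `t = 3` for `v'_i`; indices are modulo `r`. -/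
def dodecRel (r : ℕ) (x y : Fin r × Fin 4) : Prop :=
  (x.2.val = 0 ∧ y.2.val = 0 ∧ y.1.val = (x.1.val + 1) % r) ∨
  (x.2.val = 1 ∧ y.2.val = 1 ∧ y.1.val = (x.1.val + 1) % r) ∨
  (x.2.val = 0 ∧ y.2.val = 2 ∧ y.1 = x.1) ∨
  (x.2.val = 1 ∧ y.2.val = 3 ∧ y.1 = x.1) ∨
  (x.2.val = 3 ∧ y.2.val = 2 ∧ y.1 = x.1) ∨
  (x.2.val = 2 ∧ y.2.val = 3 ∧ y.1.val = (x.1.val + 1) % r)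

/-- The generalised dodecahedron `D_r`. -/
def genDodec (r : ℕ) : SimpleGraph (Fin r × Fin 4) where
  Adj x y := x ≠ y ∧ (dodecRel r x y ∨ dodecRel r y x)
  symm := by
    constructor
    rintro x y ⟨h1, h2⟩
    exact ⟨h1.symm, h2.symm⟩
  loopless := ⟨fun x h => h.1 rfl⟩

/-!
In a cubic graph an injective 3-colouring makes every neighbourhood rainbow, so each colour
class contains exactly one neighbour of every vertex. Counting the edges between all vertices
and one colour class gives `|V| = 3 * |class|`. For `r ≥ 3` the graph `D_r` is cubic with `4r`
vertices, so `3 ∣ r`. Injectivity already bounds every degree by 3, so it is enough to exhibit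
three neighbours of each vertex of `D_r`.
-/

open Finset

section InjColoring

variable {V : Type} {d : ℕ} {G : SimpleGraph V} {c : V → Fin d}

theorem IsInjColoring.injOn_neighborSet (hc : IsInjColoring G c) (x : V) :
    Set.InjOn c (G.neighborSet x) := fun _ hy _ hz hyz =>
  by_contra fun hne => hc _ _ hne ⟨x, G.adj_symm hy, G.adj_symm hz⟩ hyz

variable [Fintype V] [DecidableRel G.Adj]

theorem IsInjColoring.degree_le (hc : IsInjColoring G c) (x : V) : G.degree x ≤ d := by
  rw [← G.card_neighborFinset_eq_degree, ← Fintype.card_fin d]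
  exact card_le_card_of_injOn c (fun _ _ => mem_univ _) (by simpa using hc.injOn_neighborSet x)

theorem IsInjColoring.exists_adj_color_eq (hc : IsInjColoring G c) {x : V} (hx : d ≤ G.degree x)
    (k : Fin d) : ∃ y, G.Adj x y ∧ c y = k := by
  have hinj : Set.InjOn c (G.neighborFinset x) := by simpa using hc.injOn_neighborSet x
  have himage : (G.neighborFinset x).image c = univ := by
    refine eq_univ_of_card _ (le_antisymm (card_le_univ _) ?_)
    rwa [card_image_of_injOn hinj, G.card_neighborFinset_eq_degree, Fintype.card_fin]
  have hk : k ∈ (G.neighborFinset x).image c := himage ▸ mem_univ k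
  simpa using hk

theorem IsInjColoring.card_eq_mul_card_fiber (hc : IsInjColoring G c)
    (hdeg : ∀ x, d ≤ G.degree x) (k : Fin d) : Fintype.card V = d * #{y | c y = k} := by
  have hcount := card_mul_eq_card_mul G.Adj (s := {y | c y = k}) (t := univ) (m := d) (n := 1)
    (fun y _ => by
      rw [bipartiteAbove, ← G.neighborFinset_eq_filter, G.card_neighborFinset_eq_degree]
      exact le_antisymm (hc.degree_le y) (hdeg y))
    (fun x _ => by
      obtain ⟨y, hxy, hy⟩ := hc.exists_adj_color_eq (hdeg x) k
      refine card_eq_one.mpr ⟨y, ext fun z => ?_⟩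
      simp only [bipartiteBelow, mem_filter, mem_univ, true_and, mem_singleton]
      constructor
      · rintro ⟨hz, hzx⟩
        exact hc.injOn_neighborSet x (G.adj_symm hzx) hxy (hz.trans hy.symm)
      · rintro rfl
        exact ⟨hy, G.adj_symm hxy⟩)
  simpa [mul_comm] using hcount.symm

end InjColoring

theorem SimpleGraph.three_le_degree_of_adj {V : Type*} [DecidableEq V] {G : SimpleGraph V}
    {x a b c : V} [Fintype (G.neighborSet x)] (ha : G.Adj x a) (hb : G.Adj x b) (hc : G.Adj x c)
    (hab : a ≠ b) (hac : a ≠ c) (hbc : b ≠ c) : 3 ≤ G.degree x := by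
  rw [← G.card_neighborFinset_eq_degree, ← card_eq_three.mpr ⟨a, b, c, hab, hac, hbc, rfl⟩]
  exact card_le_card (by simp [insert_subset_iff, ha, hb, hc])

section Dodecahedron

variable {r : ℕ}

theorem genDodec_adj_u_u' (i : Fin r) : (genDodec r).Adj (i, 0) (i, 2) :=
  ⟨by simp, by simp [dodecRel]⟩

theorem genDodec_adj_v_v' (i : Fin r) : (genDodec r).Adj (i, 1) (i, 3) :=
  ⟨by simp, by simp [dodecRel]⟩

theorem genDodec_adj_v'_u' (i : Fin r) : (genDodec r).Adj (i, 3) (i, 2) :=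
  ⟨by simp, by simp [dodecRel]⟩

variable [NeZero r]

theorem Fin.val_add_one_eq_mod (i : Fin r) : (i + 1).val = (i.val + 1) % r := by
  rw [Fin.val_add, Fin.val_one', Nat.add_mod_mod]

theorem Fin.self_ne_add_one (hr : 2 ≤ r) (i : Fin r) : i ≠ i + 1 := by
  simpa [Fin.one_eq_zero_iff] using (by omega : r ≠ 1)

theorem Fin.sub_one_ne_add_one (hr : 3 ≤ r) (i : Fin r) : i - 1 ≠ i + 1 := by
  rw [Ne, sub_eq_iff_eq_add, add_assoc, left_eq_add]
  simp [Fin.ext_iff, Fin.val_add, Nat.mod_eq_of_lt (by omega : 2 < r)]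

theorem genDodec_adj_u_succ (hr : 2 ≤ r) (i : Fin r) : (genDodec r).Adj (i, 0) (i + 1, 0) :=
  ⟨by simpa using Fin.self_ne_add_one hr i, by simp [dodecRel, Fin.val_add_one_eq_mod]⟩

theorem genDodec_adj_v_succ (hr : 2 ≤ r) (i : Fin r) : (genDodec r).Adj (i, 1) (i + 1, 1) :=
  ⟨by simpa using Fin.self_ne_add_one hr i, by simp [dodecRel, Fin.val_add_one_eq_mod]⟩

theorem genDodec_adj_u'_v'_succ (i : Fin r) : (genDodec r).Adj (i, 2) (i + 1, 3) :=
  ⟨by simp, by simp [dodecRel, Fin.val_add_one_eq_mod]⟩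

theorem genDodec_three_le_degree [DecidableRel (genDodec r).Adj] (hr : 3 ≤ r)
    (x : Fin r × Fin 4) : 3 ≤ (genDodec r).degree x := by
  obtain ⟨i, t⟩ := x
  have hr2 : 2 ≤ r := by omega
  have hpred : i - 1 + 1 = i := sub_add_cancel i 1
  have h₁ : i ≠ i + 1 := Fin.self_ne_add_one hr2 i
  have h₂ : i ≠ i - 1 := by simpa using (Fin.self_ne_add_one hr2 (i - 1)).symm
  have h₃ : i + 1 ≠ i - 1 := (Fin.sub_one_ne_add_one hr i).symm
  fin_cases t
  · refine SimpleGraph.three_le_degree_of_adj (genDodec_adj_u_succ hr2 i)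
      (hpred ▸ (genDodec_adj_u_succ hr2 (i - 1)).symm) (genDodec_adj_u_u' i) ?_ ?_ ?_ <;>
      simp [h₃]
  · refine SimpleGraph.three_le_degree_of_adj (genDodec_adj_v_succ hr2 i)
      (hpred ▸ (genDodec_adj_v_succ hr2 (i - 1)).symm) (genDodec_adj_v_v' i) ?_ ?_ ?_ <;>
      simp [h₃]
  · refine SimpleGraph.three_le_degree_of_adj (genDodec_adj_u_u' i).symm
      (genDodec_adj_v'_u' i).symm (genDodec_adj_u'_v'_succ i) ?_ ?_ ?_ <;> simp [h₁]
  · refine SimpleGraph.three_le_degree_of_adj (genDodec_adj_v_v' i).symm (genDodec_adj_v'_u' i)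
      (hpred ▸ (genDodec_adj_u'_v'_succ (i - 1)).symm) ?_ ?_ ?_ <;> simp [h₂]

end Dodecahedron

/-- For `r ≥ 5` with `r` not divisible by 3, the generalised dodecahedron `D_r`
admits no injective 3-colouring. -/
theorem genDodec_no_inj_three_coloring (r : ℕ) (hr : 5 ≤ r) (hdvd : ¬ 3 ∣ r) :
    ¬ ∃ c : Fin r × Fin 4 → Fin 3, IsInjColoring (genDodec r) c := by
  classical
  rintro ⟨c, hc⟩
  have : NeZero r := ⟨by omega⟩
  have hcount := hc.card_eq_mul_card_fiber (genDodec_three_le_degree (by omega)) 0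
  rw [Fintype.card_prod, Fintype.card_fin, Fintype.card_fin] at hcount
  exact hdvd ((Nat.Coprime.dvd_mul_right (by norm_num)).mp (Dvd.intro _ hcount.symm))
end
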